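/- arXiv:2306.05662 — 4 statements merged into one kernel-verified Lean document; each statement's English description precedes it below -/
import Mathlib

section
/- Let E be a real inner product space, N ≥ 1, ρ > 0, and let z, z⁺, z* ∈ E and, for i ∈ {1,…,N}, x_i⁺, λ_i, λ_i⁺, λ_i* ∈ E satisfy: Σ_{i=1}^N λ_i = 0, Σ_{i=1}^N λ_i⁺ = 0, Σ_{i=1}^N λ_i* = 0, and x_i⁺ = (λ_i⁺ − λ_i)/(2ρ) + (z⁺ + z)/2 for each i. Then Σ_{i=1}^N ⟨ λ_i − λ_i* + ρ·(x_i⁺ − z), x_i⁺ − z* ⟩ = (1/4)·𝓛(z⁺, λ⁺) − (1/4)·𝓛(z, λ), where 𝓛(z, λ) = (1/ρ)·Σ_{i=1}^N ‖λ_i − λ_i*‖² + ρ·N·‖z − z*‖². -/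
open scoped RealInnerProductSpace

lemma key_stmt6 {E : Type*} [NormedAddCommGroup E] [InnerProductSpace ℝ E]
    (ρ : ℝ) (hρ : ρ ≠ 0) (a b v w : E) :
    ⟪a + ρ • ((2 * ρ)⁻¹ • (b - a) + (2 : ℝ)⁻¹ • (v - w)),
      (2 * ρ)⁻¹ • (b - a) + (2 : ℝ)⁻¹ • (v + w)⟫
    = (4 * ρ)⁻¹ * (‖b‖ ^ 2 - ‖a‖ ^ 2) + (ρ / 4) * (‖v‖ ^ 2 - ‖w‖ ^ 2)
      + 4⁻¹ * ⟪a + b, v + w⟫ + 4⁻¹ * ⟪b - a, v - w⟫ := by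
  simp only [inner_add_left, inner_add_right, inner_sub_left, inner_sub_right,
    real_inner_smul_left, real_inner_smul_right, real_inner_self_eq_norm_sq]
  rw [real_inner_comm b a, real_inner_comm v a, real_inner_comm w a,
    real_inner_comm v b, real_inner_comm w b, real_inner_comm w v]
  field_simp
  ring

/-- The Lyapunov function of the paper: 𝓛(z, λ) = (1/ρ)·Σ‖λ_i − λ_i*‖² + ρ·N·‖z − z*‖². -/
noncomputable def Lyap {E : Type*} [NormedAddCommGroup E] [InnerProductSpace ℝ E]
    (N : ℕ) (ρ : ℝ) (zstar : E) (lamstar : Fin N → E) (z : E) (lam : Fin N → E) : ℝ :=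
  ρ⁻¹ * ∑ i, ‖lam i - lamstar i‖ ^ 2 + ρ * N * ‖z - zstar‖ ^ 2

theorem stmt_6 {E : Type*} [NormedAddCommGroup E] [InnerProductSpace ℝ E]
    (N : ℕ) (hN : 1 ≤ N) (ρ : ℝ) (hρ : 0 < ρ)
    (z zp zstar : E) (xp lam lamp lamstar : Fin N → E)
    (hlam : ∑ i, lam i = 0)
    (hlamp : ∑ i, lamp i = 0)
    (hlamstar : ∑ i, lamstar i = 0)
    (hxp : ∀ i, xp i = (2 * ρ)⁻¹ • (lamp i - lam i) + (2 : ℝ)⁻¹ • (zp + z)) :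
    ∑ i, ⟪lam i - lamstar i + ρ • (xp i - z), xp i - zstar⟫
      = (1 / 4) * Lyap N ρ zstar lamstar zp lamp - (1 / 4) * Lyap N ρ zstar lamstar z lam := by
  have hA : ∑ i, (lam i - lamstar i) = 0 := by
    rw [Finset.sum_sub_distrib, hlam, hlamstar, sub_zero]
  have hB : ∑ i, (lamp i - lamstar i) = 0 := by
    rw [Finset.sum_sub_distrib, hlamp, hlamstar, sub_zero]
  have hstep : ∀ i : Fin N,
      ⟪lam i - lamstar i + ρ • (xp i - z), xp i - zstar⟫
      = (4 * ρ)⁻¹ * (‖lamp i - lamstar i‖ ^ 2 - ‖lam i - lamstar i‖ ^ 2)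
        + (ρ / 4) * (‖zp - zstar‖ ^ 2 - ‖z - zstar‖ ^ 2)
        + 4⁻¹ * ⟪(lam i - lamstar i) + (lamp i - lamstar i), (zp - zstar) + (z - zstar)⟫
        + 4⁻¹ * ⟪(lamp i - lamstar i) - (lam i - lamstar i), (zp - zstar) - (z - zstar)⟫ := by
    intro i
    have e1 : xp i - z
        = (2 * ρ)⁻¹ • ((lamp i - lamstar i) - (lam i - lamstar i))
          + (2 : ℝ)⁻¹ • ((zp - zstar) - (z - zstar)) := by
      rw [hxp i]; module
    have e2 : xp i - zstar
        = (2 * ρ)⁻¹ • ((lamp i - lamstar i) - (lam i - lamstar i))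
          + (2 : ℝ)⁻¹ • ((zp - zstar) + (z - zstar)) := by
      rw [hxp i]; module
    rw [e1, e2]
    exact key_stmt6 ρ hρ.ne' (lam i - lamstar i) (lamp i - lamstar i)
      (zp - zstar) (z - zstar)
  rw [Finset.sum_congr rfl (fun i _ => hstep i)]
  rw [Finset.sum_add_distrib, Finset.sum_add_distrib, Finset.sum_add_distrib]
  have hc1 : ∑ i, 4⁻¹ * ⟪(lam i - lamstar i) + (lamp i - lamstar i),
      (zp - zstar) + (z - zstar)⟫ = 0 := by
    rw [← Finset.mul_sum, ← sum_inner]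
    simp [Finset.sum_add_distrib, hA, hB]
  have hc2 : ∑ i, 4⁻¹ * ⟪(lamp i - lamstar i) - (lam i - lamstar i),
      (zp - zstar) - (z - zstar)⟫ = 0 := by
    rw [← Finset.mul_sum, ← sum_inner]
    simp [Finset.sum_sub_distrib, hA, hB, hlam, hlamp, hlamstar]
  rw [hc1, hc2, add_zero, add_zero, ← Finset.mul_sum, Finset.sum_sub_distrib,
    Finset.sum_const, Finset.card_univ, Fintype.card_fin, nsmul_eq_mul]
  unfold Lyap
  field_simp
  ring
end

section
/- Let E be a real inner product space, N ≥ 1, ρ > 0, and let f_i : E → ℝ (i ∈ {1,…,N}) be convex. Let z* ∈ E and λ_i* ∈ E satisfy: −λ_i* is a subgradient of f_i at z* for each i, and Σ_{i=1}^N λ_i* = 0. Suppose one Reduced Consensus ALADIN iteration produces, from (z, λ) with Σ_{i=1}^N λ_i = 0, points x_i⁺ ∈ E and subgradients g_i of f_i at x_i⁺ with g_i = ρ·(z − x_i⁺) − λ_i, then sets z⁺ = (1/N)·Σ_{i=1}^N (x_i⁺ − g_i/ρ) and λ_i⁺ = ρ·(x_i⁺ − z⁺) − g_i. Then 𝓛(z⁺,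 λ⁺) ≤ 𝓛(z, λ), where 𝓛(z, λ) = (1/ρ)·Σ_{i=1}^N ‖λ_i − λ_i*‖² + ρ·N·‖z − z*‖². -/
open scoped RealInnerProductSpace

/-- g is a subgradient of f at x. -/
def IsSubgradientAt {E : Type*} [NormedAddCommGroup E] [InnerProductSpace ℝ E]
    (f : E → ℝ) (g x : E) : Prop :=
  ∀ y : E, f x + ⟪g, y - x⟫ ≤ f y

theorem stmt_7 {E : Type*} [NormedAddCommGroup E] [InnerProductSpace ℝ E]
    (N : ℕ) (hN : 1 ≤ N) (ρ : ℝ) (hρ : 0 < ρ)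
    (f : Fin N → E → ℝ) (hconv : ∀ i, ConvexOn ℝ Set.univ (f i))
    (zstar : E) (lamstar : Fin N → E)
    (hstar : ∀ i, IsSubgradientAt (f i) (-(lamstar i)) zstar)
    (hlamstar : ∑ i, lamstar i = 0)
    (z zp : E) (lam lamp xp g : Fin N → E)
    (hlam : ∑ i, lam i = 0)
    (hg : ∀ i, IsSubgradientAt (f i) (g i) (xp i) ∧ g i = ρ • (z - xp i) - lam i)
    (hzp : zp = (N : ℝ)⁻¹ • ∑ i, (xp i - ρ⁻¹ • g i))
    (hlamp : ∀ i, lamp i = ρ • (xp i - zp) - g i) :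
    Lyap N ρ zstar lamstar zp lamp ≤ Lyap N ρ zstar lamstar z lam := by
  classical
  have hρ0 : ρ ≠ 0 := ne_of_gt hρ
  have hN0 : (N : ℝ) ≠ 0 := Nat.cast_ne_zero.mpr (by omega)
  have hgi : ∀ i, g i = ρ • (z - xp i) - lam i := fun i => (hg i).2
  -- Step 1: monotonicity from the two subgradient inequalities
  have hS : ∀ i, 0 ≤ ⟪g i + lamstar i, xp i - zstar⟫ := by
    intro i
    have h1 := (hg i).1 zstar
    have h2 := hstar i (xp i)
    simp only [inner_add_left, inner_sub_right, inner_neg_left] at h1 h2 ⊢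
    linarith
  -- Step 2: the averaging constraint
  have hterm : ∀ i, xp i - ρ⁻¹ • g i = (2 : ℝ) • xp i - z + ρ⁻¹ • lam i := by
    intro i
    rw [hgi i, smul_sub, smul_smul, inv_mul_cancel₀ hρ0, one_smul, two_smul]
    abel
  have hv : (N : ℝ) • zp + (N : ℝ) • z = (2 : ℝ) • (∑ i, xp i) := by
    have h1 : (N : ℝ) • zp = ∑ i, (xp i - ρ⁻¹ • g i) := by
      rw [hzp, smul_inv_smul₀ hN0]
    rw [h1]
    have h2 : ∑ i, (xp i - ρ⁻¹ • g i)
        = ∑ i, ((2 : ℝ) • xp i - z + ρ⁻¹ • lam i) :=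
      Finset.sum_congr rfl fun i _ => hterm i
    rw [h2, Finset.sum_add_distrib, Finset.sum_sub_distrib, ← Finset.smul_sum,
      ← Finset.smul_sum, hlam, smul_zero, add_zero, Finset.sum_const,
      Finset.card_univ, Fintype.card_fin]
    have : (N : ℕ) • z = (N : ℝ) • z := by
      rw [← Nat.cast_smul_eq_nsmul ℝ]
    rw [this]
    abel
  have hc : ∀ y : E, (N : ℝ) * ⟪zp, y⟫ + (N : ℝ) * ⟪z, y⟫ = 2 * ⟪∑ i, xp i, y⟫ := by
    intro y
    have := congrArg (fun w => ⟪w, y⟫) hv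
    simpa [inner_add_left, real_inner_smul_left] using this
  -- Step 3: per-index identity
  have hper : ∀ i,
      ρ⁻¹ * ‖lamp i - lamstar i‖ ^ 2 + ρ * ‖zp - zstar‖ ^ 2
        + 4 * ⟪g i + lamstar i, xp i - zstar⟫
      = ρ⁻¹ * ‖lam i - lamstar i‖ ^ 2 + ρ * ‖z - zstar‖ ^ 2
        + 2 * ⟪lam i - lamstar i, (2 : ℝ) • zstar - z - zp⟫
        + ρ * (‖(2 : ℝ) • xp i - z - zp‖ ^ 2 + ‖zp - zstar‖ ^ 2 - ‖z - zstar‖ ^ 2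
            + 4 * ⟪z - xp i, xp i - zstar⟫) := by
    intro i
    have hlp : lamp i = (lam i) + ρ • ((2 : ℝ) • xp i - z - zp) := by
      rw [hlamp i, hgi i]
      module
    rw [hlp, hgi i]
    simp only [← real_inner_self_eq_norm_sq, inner_add_left, inner_add_right,
      inner_sub_left, inner_sub_right, real_inner_smul_left, real_inner_smul_right,
      real_inner_comm]
    field_simp
    ring
  -- Step 4: the sum of the quadratic residuals vanishes
  have hq : ∀ i, ‖(2 : ℝ) • xp i - z - zp‖ ^ 2 + ‖zp - zstar‖ ^ 2 - ‖z - zstar‖ ^ 2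
      + 4 * ⟪z - xp i, xp i - zstar⟫
      = -4 * ⟪xp i, zp⟫ + 4 * ⟪xp i, zstar⟫
        + (2 * ⟪z, zp⟫ + 2 * ⟪zp, zp⟫ - 2 * ⟪zp, zstar⟫ - 2 * ⟪z, zstar⟫) := by
    intro i
    simp only [← real_inner_self_eq_norm_sq, inner_add_left, inner_add_right,
      inner_sub_left, inner_sub_right, real_inner_smul_left, real_inner_smul_right,
      real_inner_comm]
    ring
  have hsumq : ∑ i, (‖(2 : ℝ) • xp i - z - zp‖ ^ 2 + ‖zp - zstar‖ ^ 2 - ‖z - zstar‖ ^ 2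
      + 4 * ⟪z - xp i, xp i - zstar⟫) = 0 := by
    rw [Finset.sum_congr rfl fun i _ => hq i]
    rw [Finset.sum_add_distrib, Finset.sum_add_distrib, Finset.sum_const,
      Finset.card_univ, Fintype.card_fin]
    have e1 : ∑ i, (-4 : ℝ) * ⟪xp i, zp⟫ = -4 * ⟪∑ i, xp i, zp⟫ := by
      rw [sum_inner, Finset.mul_sum]
    have e2 : ∑ i, (4 : ℝ) * ⟪xp i, zstar⟫ = 4 * ⟪∑ i, xp i, zstar⟫ := by
      rw [sum_inner, Finset.mul_sum]
    rw [e1, e2, nsmul_eq_mul]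
    have c1 := hc zp
    have c2 := hc zstar
    simp only [real_inner_comm] at c1 c2 ⊢
    linarith
  -- Step 5: the lam-linear residual vanishes
  have hA : ∑ i, ⟪lam i - lamstar i, (2 : ℝ) • zstar - z - zp⟫ = 0 := by
    rw [← sum_inner, Finset.sum_sub_distrib, hlam, hlamstar, sub_zero,
      inner_zero_left]
  -- Assemble
  have key : Lyap N ρ zstar lamstar zp lamp + 4 * ∑ i, ⟪g i + lamstar i, xp i - zstar⟫
      = Lyap N ρ zstar lamstar z lam := by
    have e := Finset.sum_congr rfl fun i (_ : i ∈ Finset.univ) => hper i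
    simp only [Finset.sum_add_distrib, ← Finset.mul_sum, Finset.sum_const,
      Finset.card_univ, Fintype.card_fin, nsmul_eq_mul] at e
    have hsplit : (∑ i, (‖(2 : ℝ) • xp i - z - zp‖ ^ 2 + ‖zp - zstar‖ ^ 2
        - ‖z - zstar‖ ^ 2)) + 4 * ∑ i, ⟪z - xp i, xp i - zstar⟫ = 0 := by
      have h4 : (∑ i, (‖(2 : ℝ) • xp i - z - zp‖ ^ 2 + ‖zp - zstar‖ ^ 2
          - ‖z - zstar‖ ^ 2)) + 4 * ∑ i, ⟪z - xp i, xp i - zstar⟫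
          = ∑ i, (‖(2 : ℝ) • xp i - z - zp‖ ^ 2 + ‖zp - zstar‖ ^ 2 - ‖z - zstar‖ ^ 2
            + 4 * ⟪z - xp i, xp i - zstar⟫) := by
        rw [Finset.mul_sum, ← Finset.sum_add_distrib]
      rw [h4, hsumq]
    rw [hA, hsplit, mul_zero, mul_zero, add_zero, add_zero] at e
    unfold Lyap
    linarith
  have hSsum : 0 ≤ ∑ i, ⟪g i + lamstar i, xp i - zstar⟫ :=
    Finset.sum_nonneg fun i _ => hS i
  linarith
end

section
/- Let E be a real inner product space, N ≥ 1, ρ > 0, and let z, z⁺, z* ∈ E and, for i ∈ {1,…,N}, x_i⁺, λ_i, λ_i⁺, λ_i*, g_i ∈ E satisfy: g_i = ρ·(z − x_i⁺) − λ_i for each i, λ_i⁺ = ρ·(x_i⁺ − z⁺) − g_i for each i, z⁺ = (1/N)·Σ_{i=1}^N (x_i⁺ − g_i/ρ), Σ_{i=1}^N λ_i = 0, and Σ_{i=1}^N λ_i* = 0. Then Σ_{i=1}^N ⟨ x_i⁺ − z*, g_i + λ_i* ⟩ = (1/4)·𝓛(z, λ) − (1/4)·𝓛(z⁺, λ⁺),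 where 𝓛(z, λ) = (1/ρ)·Σ_{i=1}^N ‖λ_i − λ_i*‖² + ρ·N·‖z − z*‖². -/
open scoped RealInnerProductSpace

theorem stmt_9 {E : Type*} [NormedAddCommGroup E] [InnerProductSpace ℝ E]
    (N : ℕ) (hN : 1 ≤ N) (ρ : ℝ) (hρ : 0 < ρ)
    (z zp zstar : E) (xp lam lamp lamstar g : Fin N → E)
    (hg : ∀ i, g i = ρ • (z - xp i) - lam i)
    (hlamp : ∀ i, lamp i = ρ • (xp i - zp) - g i)
    (hzp : zp = (N : ℝ)⁻¹ • ∑ i, (xp i - ρ⁻¹ • g i))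
    (hlam : ∑ i, lam i = 0)
    (hlamstar : ∑ i, lamstar i = 0) :
    ∑ i, ⟪xp i - zstar, g i + lamstar i⟫
      = (1 / 4) * Lyap N ρ zstar lamstar z lam - (1 / 4) * Lyap N ρ zstar lamstar zp lamp := by
  have hρ' : ρ ≠ 0 := ne_of_gt hρ
  have hN' : (N : ℝ) ≠ 0 := Nat.cast_ne_zero.mpr (by omega)
  obtain ⟨s, hsdef⟩ : ∃ s : Fin N → E, s = fun i => (2:ℝ) • xp i - z - zp := ⟨_, rfl⟩
  have hsi : ∀ i, s i = (2:ℝ) • xp i - z - zp := fun i => by rw [hsdef]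
  have hconst : ∀ v : E, ∑ _i : Fin N, v = (N:ℝ) • v := fun v => by
    rw [Finset.sum_const, Finset.card_fin]
    exact (Nat.cast_smul_eq_nsmul ℝ N v).symm
  -- sum of g in terms of sum of xp
  have h1 : ∑ i, g i = ρ • ((N:ℝ) • z) - ρ • ∑ i, xp i := by
    calc ∑ i, g i = ∑ i, (ρ • (z - xp i) - lam i) := Finset.sum_congr rfl fun i _ => hg i
      _ = ρ • ∑ i, (z - xp i) - ∑ i, lam i := by
          rw [Finset.sum_sub_distrib, Finset.smul_sum]
      _ = ρ • ((N:ℝ) • z - ∑ i, xp i) - 0 := by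
          rw [hlam, Finset.sum_sub_distrib, hconst z]
      _ = _ := by rw [sub_zero, smul_sub]
  have h2 : (N:ℝ) • zp = ∑ i, xp i - ρ⁻¹ • ∑ i, g i := by
    rw [hzp, smul_smul, mul_inv_cancel₀ hN', one_smul, Finset.sum_sub_distrib, ← Finset.smul_sum]
  have h2' : ρ • ((N:ℝ) • zp) = ρ • ∑ i, xp i - ∑ i, g i := by
    rw [h2, smul_sub, smul_inv_smul₀ hρ']
  have hsumg : (2:ℝ) • ∑ i, g i = (ρ * N) • (z - zp) := by
    linear_combination (norm := module) h1 + h2'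
  have e3 : ∑ i, s i = (2:ℝ) • ∑ i, xp i - (N:ℝ) • z - (N:ℝ) • zp := by
    simp only [hsdef]
    rw [Finset.sum_sub_distrib, Finset.sum_sub_distrib, ← Finset.smul_sum, hconst z, hconst zp]
  have hsums : ∑ i, s i = 0 := by
    have e4 : ρ • ∑ i, s i = (0:E) := by
      linear_combination (norm := module) ρ • e3 + (2:ℝ) • h1 - hsumg
    exact (smul_eq_zero.mp e4).resolve_left hρ'
  -- lamp in terms of lam and s
  have hlp : ∀ i, lamp i - lamstar i = (lam i - lamstar i) + ρ • s i := by
    intro i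
    rw [hlamp i, hg i, hsi i]
    module
  -- norm expansion
  have hnorm : ∀ i, ‖lamp i - lamstar i‖ ^ 2
      = ‖lam i - lamstar i‖ ^ 2 + 2 * ρ * ⟪lam i - lamstar i, s i⟫ + ρ ^ 2 * ‖s i‖ ^ 2 := by
    intro i
    rw [hlp i, norm_add_sq_real, real_inner_smul_right, norm_smul, Real.norm_eq_abs, mul_pow,
      sq_abs]
    ring
  -- per-i key identity
  have hP : ∀ i, -2 * ⟪lam i - lamstar i, s i⟫ - ρ * ‖s i‖ ^ 2
      = 4 * ⟪xp i - zstar, g i + lamstar i⟫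
        + 2 * ⟪(2:ℝ) • zstar - z - zp, g i + lamstar i⟫ - ρ * ⟪s i, z - zp⟫ := by
    intro i
    have hA : (-2:ℝ) • (lam i - lamstar i) - ρ • s i
        = (2:ℝ) • (g i + lamstar i) - ρ • (z - zp) := by
      have hli : lam i = ρ • (z - xp i) - g i := by rw [hg i]; abel
      rw [hli, hsi i]
      module
    have hB : s i = (2:ℝ) • (xp i - zstar) + ((2:ℝ) • zstar - z - zp) := by
      rw [hsi i]; module
    calc -2 * ⟪lam i - lamstar i, s i⟫ - ρ * ‖s i‖ ^ 2
        = ⟪s i, (-2:ℝ) • (lam i - lamstar i) - ρ • s i⟫ := by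
          rw [inner_sub_right, real_inner_smul_right, real_inner_smul_right,
            real_inner_self_eq_norm_sq, real_inner_comm (s i) (lam i - lamstar i)]
      _ = ⟪s i, (2:ℝ) • (g i + lamstar i) - ρ • (z - zp)⟫ := by rw [hA]
      _ = 2 * ⟪s i, g i + lamstar i⟫ - ρ * ⟪s i, z - zp⟫ := by
          rw [inner_sub_right, real_inner_smul_right, real_inner_smul_right]
      _ = _ := by
          rw [hB, inner_add_left, real_inner_smul_left]
          ring
  -- sum the per-i identities
  have hPsum : ∑ i, (-2 * ⟪lam i - lamstar i, s i⟫ - ρ * ‖s i‖ ^ 2)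
      = 4 * ∑ i, ⟪xp i - zstar, g i + lamstar i⟫
        + 2 * ⟪(2:ℝ) • zstar - z - zp, ∑ i, g i⟫ := by
    rw [Finset.sum_congr rfl fun i _ => hP i]
    rw [Finset.sum_sub_distrib, Finset.sum_add_distrib, ← Finset.mul_sum, ← Finset.mul_sum,
      ← Finset.mul_sum, ← inner_sum, ← sum_inner, hsums]
    have hgl : ∑ i, (g i + lamstar i) = ∑ i, g i := by
      rw [Finset.sum_add_distrib, hlamstar, add_zero]
    rw [hgl]
    simp
  have hPsum' : -2 * ∑ i, ⟪lam i - lamstar i, s i⟫ - ρ * ∑ i, ‖s i‖ ^ 2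
      = 4 * ∑ i, ⟪xp i - zstar, g i + lamstar i⟫
        + 2 * ⟪(2:ℝ) • zstar - z - zp, ∑ i, g i⟫ := by
    rw [← hPsum, Finset.sum_sub_distrib, ← Finset.mul_sum, ← Finset.mul_sum]
  -- the z-part identity
  have hz : ⟪(2:ℝ) • zstar - z - zp, z - zp⟫ + ‖z - zstar‖ ^ 2 - ‖zp - zstar‖ ^ 2 = 0 := by
    have e : ‖z - zstar‖ ^ 2
        = ‖z - zp‖ ^ 2 + 2 * ⟪z - zp, zp - zstar⟫ + ‖zp - zstar‖ ^ 2 := by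
      rw [show z - zstar = (z - zp) + (zp - zstar) by abel, norm_add_sq_real]
    have e2 : ⟪(2:ℝ) • zstar - z - zp, z - zp⟫
        = -‖z - zp‖ ^ 2 - 2 * ⟪z - zp, zp - zstar⟫ := by
      rw [show (2:ℝ) • zstar - z - zp = -(z - zp) - (2:ℝ) • (zp - zstar) by module,
        inner_sub_left, inner_neg_left, real_inner_smul_left,
        real_inner_self_eq_norm_sq, real_inner_comm (zp - zstar) (z - zp)]
    rw [e, e2]; ring
  -- relate the inner product with sum g to the z difference
  have hwg : 2 * ⟪(2:ℝ) • zstar - z - zp, ∑ i, g i⟫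
      = ρ * N * ⟪(2:ℝ) • zstar - z - zp, z - zp⟫ := by
    have e5 : ⟪(2:ℝ) • zstar - z - zp, (2:ℝ) • ∑ i, g i⟫
        = ⟪(2:ℝ) • zstar - z - zp, (ρ * N) • (z - zp)⟫ := by rw [hsumg]
    rw [real_inner_smul_right, real_inner_smul_right] at e5
    linarith [e5]
  -- summed norm expansion
  have hnsum : ∑ i, ‖lamp i - lamstar i‖ ^ 2
      = ∑ i, ‖lam i - lamstar i‖ ^ 2 + 2 * ρ * ∑ i, ⟪lam i - lamstar i, s i⟫
        + ρ ^ 2 * ∑ i, ‖s i‖ ^ 2 := by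
    rw [Finset.sum_congr rfl fun i _ => hnorm i, Finset.sum_add_distrib, Finset.sum_add_distrib,
      ← Finset.mul_sum, ← Finset.mul_sum]
  -- assemble
  simp only [Lyap]
  rw [hnsum]
  have hinv : ρ⁻¹ * (∑ i, ‖lam i - lamstar i‖ ^ 2 + 2 * ρ * ∑ i, ⟪lam i - lamstar i, s i⟫
      + ρ ^ 2 * ∑ i, ‖s i‖ ^ 2)
      = ρ⁻¹ * ∑ i, ‖lam i - lamstar i‖ ^ 2 + 2 * ∑ i, ⟪lam i - lamstar i, s i⟫
        + ρ * ∑ i, ‖s i‖ ^ 2 := by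
    field_simp
  rw [hinv]
  linear_combination (-(1:ℝ)/4) * hPsum' + (-(1:ℝ)/4) * hwg + (-(ρ * (N:ℝ))/4) * hz
end

section
/- Let E be a real inner product space, N ≥ 1, ρ > 0, m_f > 0, δ > 0, and let z, z⁺, z* ∈ E and, for i ∈ {1,…,N}, x_i⁺, λ_i, λ_i⁺, λ_i*, g_i ∈ E satisfy the Reduced Consensus ALADIN update relations: g_i = ρ·(z − x_i⁺) − λ_i, λ_i⁺ = ρ·(x_i⁺ − z⁺) − g_i, z⁺ = (1/N)·Σ_{i=1}^N (x_i⁺ − g_i/ρ), Σ_{i=1}^N λ_i = 0, Σ_{i=1}^N λ_i* = 0. Assume the strong-convexity inequality m_f · Σ_{i=1}^N ‖x_i⁺ − z*‖² ≤ Σ_{i=1}^N ⟨ x_i⁺ − z*, g_i + λ_i* ⟩ and the rate condition δ·𝓛(z⁺, λ⁺) ≤ 4·m_f·Σ_{i=1}^N ‖x_i⁺ − z*‖². Then (1 + δ)·𝓛(z⁺, λ⁺) ≤ 𝓛(z, λ), where 𝓛(z, λ) = (1/ρ)·Σ_{i=1}^N ‖λ_i − λ_i*‖² + ρ·N·‖z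 − z*‖². -/
open scoped RealInnerProductSpace

lemma norm_sq_sub_norm_sq {E : Type*} [NormedAddCommGroup E] [InnerProductSpace ℝ E] (a b : E) :
    ‖a‖^2 - ‖b‖^2 = ⟪a - b, a + b⟫ := by
  simp [inner_sub_left, inner_add_right, real_inner_self_eq_norm_sq, real_inner_comm b a]

theorem stmt_10 {E : Type*} [NormedAddCommGroup E] [InnerProductSpace ℝ E]
    (N : ℕ) (hN : 1 ≤ N) (ρ mf δ : ℝ) (hρ : 0 < ρ) (hmf : 0 < mf) (hδ : 0 < δ)
    (z zp zstar : E) (xp lam lamp lamstar g : Fin N → E)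
    (hg : ∀ i, g i = ρ • (z - xp i) - lam i)
    (hlamp : ∀ i, lamp i = ρ • (xp i - zp) - g i)
    (hzp : zp = (N : ℝ)⁻¹ • ∑ i, (xp i - ρ⁻¹ • g i))
    (hlam : ∑ i, lam i = 0)
    (hlamstar : ∑ i, lamstar i = 0)
    (hsc : mf * ∑ i, ‖xp i - zstar‖ ^ 2 ≤ ∑ i, ⟪xp i - zstar, g i + lamstar i⟫)
    (hrate : δ * Lyap N ρ zstar lamstar zp lamp ≤ 4 * mf * ∑ i, ‖xp i - zstar‖ ^ 2) :
    (1 + δ) * Lyap N ρ zstar lamstar zp lamp ≤ Lyap N ρ zstar lamstar z lam := by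
  have hNne : (N : ℝ) ≠ 0 := by positivity
  have hρne : ρ ≠ 0 := hρ.ne'
  -- sum of g
  have hsum_g : ∑ i, g i = ρ • ((N : ℝ) • z - ∑ i, xp i) := by
    have : ∑ i, g i = ∑ i, (ρ • (z - xp i)) - ∑ i, lam i := by
      rw [← Finset.sum_sub_distrib]
      exact Finset.sum_congr rfl fun i _ => hg i
    rw [this, hlam, sub_zero, ← Finset.smul_sum, Finset.sum_sub_distrib,
      Finset.sum_const, Finset.card_univ, Fintype.card_fin,
      ← Nat.cast_smul_eq_nsmul ℝ]
  -- key1 : N • (z + zp) = 2 • ∑ xp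
  have key1 : (N : ℝ) • (z + zp) = (2 : ℝ) • ∑ i, xp i := by
    have h1 : (N : ℝ) • zp = ∑ i, xp i - ρ⁻¹ • ∑ i, g i := by
      rw [hzp, smul_smul, mul_inv_cancel₀ hNne, one_smul, Finset.sum_sub_distrib,
        ← Finset.smul_sum]
    rw [hsum_g, inv_smul_smul₀ hρne] at h1
    rw [smul_add, h1]
    module
  have hxp : ∑ i, xp i = ((N : ℝ) / 2) • (z + zp) := by
    have h2 : ((1:ℝ)/2) • ((N : ℝ) • (z + zp)) = ((1:ℝ)/2) • ((2:ℝ) • ∑ i, xp i) := by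
      rw [key1]
    rw [smul_smul, smul_smul] at h2
    norm_num at h2
    rw [← h2]
    match_scalars <;> ring
  have key2 : ∑ i, g i = (ρ * N / 2) • (z - zp) := by
    rw [hsum_g, hxp]
    match_scalars <;> ring
  -- sum of v_i := g i + lamstar i
  have hsum_v : ∑ i, (g i + lamstar i) = (ρ * N / 2) • (z - zp) := by
    rw [Finset.sum_add_distrib, hlamstar, add_zero, key2]
  -- per-term identity
  have hterm : ∀ i, ρ⁻¹ * (‖lam i - lamstar i‖^2 - ‖lamp i - lamstar i‖^2)
      = ⟪z + zp - (2:ℝ) • xp i, ρ • (z - zp) - (2:ℝ) • (g i + lamstar i)⟫ := by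
    intro i
    have hlam_i : lam i = ρ • (z - xp i) - g i := by rw [hg i]; abel
    have hd : lam i - lamstar i - (lamp i - lamstar i) = ρ • (z + zp - (2:ℝ) • xp i) := by
      rw [hlam_i, hlamp i]; module
    have hs : lam i - lamstar i + (lamp i - lamstar i)
        = ρ • (z - zp) - (2:ℝ) • (g i + lamstar i) := by
      rw [hlam_i, hlamp i]; module
    rw [norm_sq_sub_norm_sq, hd, hs, real_inner_smul_left, inv_mul_cancel_left₀ hρne]
  -- sum of u_i := z + zp - 2 xp i is zero
  have hsum_u : ∑ i, (z + zp - (2:ℝ) • xp i) = 0 := by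
    rw [Finset.sum_sub_distrib, Finset.sum_const, Finset.card_univ, Fintype.card_fin,
      ← Nat.cast_smul_eq_nsmul ℝ, ← Finset.smul_sum, key1, sub_self]
  -- main identity
  have hL : Lyap N ρ zstar lamstar z lam - Lyap N ρ zstar lamstar zp lamp
      = 4 * ∑ i, ⟪xp i - zstar, g i + lamstar i⟫ := by
    have hA : ρ⁻¹ * ∑ i, ‖lam i - lamstar i‖^2 - ρ⁻¹ * ∑ i, ‖lamp i - lamstar i‖^2
        = ∑ i, ⟪z + zp - (2:ℝ) • xp i, ρ • (z - zp) - (2:ℝ) • (g i + lamstar i)⟫ := by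
      rw [Finset.mul_sum, Finset.mul_sum, ← Finset.sum_sub_distrib]
      refine Finset.sum_congr rfl fun i _ => ?_
      rw [← mul_sub]; exact hterm i
    -- expand the inner sum
    have hB : ∑ i, ⟪z + zp - (2:ℝ) • xp i, ρ • (z - zp) - (2:ℝ) • (g i + lamstar i)⟫
        = - 2 * ⟪z + zp, (ρ * N / 2) • (z - zp)⟫
          + 4 * ∑ i, ⟪xp i, g i + lamstar i⟫ := by
      have e1 : ∀ i, ⟪z + zp - (2:ℝ) • xp i, ρ • (z - zp) - (2:ℝ) • (g i + lamstar i)⟫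
          = ⟪z + zp - (2:ℝ) • xp i, ρ • (z - zp)⟫
            - 2 * ⟪z + zp, g i + lamstar i⟫ + 4 * ⟪xp i, g i + lamstar i⟫ := by
        intro i
        simp [inner_sub_left, inner_sub_right, real_inner_smul_left, real_inner_smul_right,
          inner_add_left, inner_add_right]
        ring
      rw [Finset.sum_congr rfl fun i _ => e1 i]
      rw [Finset.sum_add_distrib, Finset.sum_sub_distrib, ← sum_inner, hsum_u]
      rw [← Finset.mul_sum, ← Finset.mul_sum, ← inner_sum, hsum_v]
      simp only [inner_zero_left]
      ring
    have hC : ρ * N * ‖z - zstar‖^2 - ρ * N * ‖zp - zstar‖^2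
        = ρ * N * ⟪z - zp, z + zp - (2:ℝ) • zstar⟫ := by
      rw [← mul_sub, norm_sq_sub_norm_sq]
      congr 2 <;> module
    have hD : ∑ i, ⟪xp i - zstar, g i + lamstar i⟫
        = ∑ i, ⟪xp i, g i + lamstar i⟫ - ⟪zstar, (ρ * N / 2) • (z - zp)⟫ := by
      rw [← hsum_v, inner_sum, ← Finset.sum_sub_distrib]
      exact Finset.sum_congr rfl fun i _ => by rw [inner_sub_left]
    simp only [Lyap]
    have : ρ⁻¹ * ∑ i, ‖lam i - lamstar i‖^2 + ρ * N * ‖z - zstar‖^2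
        - (ρ⁻¹ * ∑ i, ‖lamp i - lamstar i‖^2 + ρ * N * ‖zp - zstar‖^2)
        = (ρ⁻¹ * ∑ i, ‖lam i - lamstar i‖^2 - ρ⁻¹ * ∑ i, ‖lamp i - lamstar i‖^2)
          + (ρ * N * ‖z - zstar‖^2 - ρ * N * ‖zp - zstar‖^2) := by ring
    rw [this, hA, hB, hC, hD]
    have hinner1 : ⟪z + zp, (ρ * N / 2) • (z - zp)⟫ = (ρ * N / 2) * ⟪z + zp, z - zp⟫ :=
      real_inner_smul_right _ _ _
    have hinner2 : ⟪zstar, (ρ * N / 2) • (z - zp)⟫ = (ρ * N / 2) * ⟪zstar, z - zp⟫ :=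
      real_inner_smul_right _ _ _
    have hinner3 : ⟪z - zp, z + zp - (2:ℝ) • zstar⟫
        = ⟪z + zp, z - zp⟫ - 2 * ⟪zstar, z - zp⟫ := by
      rw [inner_sub_right, real_inner_smul_right, real_inner_comm (z - zp) (z + zp),
        real_inner_comm (z - zp) zstar]
    rw [hinner1, hinner2, hinner3]
    ring
  have h4 : 4 * (mf * ∑ i, ‖xp i - zstar‖ ^ 2) ≤ 4 * ∑ i, ⟪xp i - zstar, g i + lamstar i⟫ := by
    linarith
  linarith [hL, hrate, h4]
end
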